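/- arXiv:hep-th/9210044 — 5 statements merged into one kernel-verified Lean document; each statement's English description precedes it below -/
import Mathlib

section
/- For a finite-dimensional Hopf *-algebra H, the antipode-star map on the quantum double satisfies (S ∘ *)(a⊗h) = S⁻³(a*) ⊗ S(h*), and consequently (S ∘ *)² = id on D(H). -/
/-!
In `D(H)`, every `a ⊗ h` factors as `(a ⊗ 1)(1 ⊗ h)`, since `Δ1 = 1 ⊗ 1` and `⟨1, ·⟩ = ε` collapse
the product formula. As `S_D` is an antihomomorphism,
`S_D((1 ⊗ h*)((S²a)* ⊗ 1)) = S⁻¹((S²a)*) ⊗ S(h*)`. The *-axiom `S ∘ * ∘ S ∘ * = id` reads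
`S⁻¹ ∘ * = * ∘ S`, so `S⁻¹((S²a)*) = (S³a)* = S⁻³(a*)`, and applying the formula twice
gives `S⁻³((S³a)**) ⊗ S((S h*)*) = a ⊗ h`. -/

open scoped TensorProduct

/-- Interpret a list of pairs as a sum of pure tensors (Sweedler representation). -/
noncomputable def toT {A : Type} [AddCommMonoid A] [Module ℂ A] (l : List (A × A)) :
    A ⊗[ℂ] A := (l.map fun p => p.1 ⊗ₜ[ℂ] p.2).sum

/-- A threefold Sweedler representation `(x₍₁₎, x₍₂₎, x₍₃₎)` obtained by iterating `ρ`. -/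
def tri {A : Type} (ρ : A → List (A × A)) (x : A) : List (A × A × A) :=
  (ρ x).flatMap fun p => (ρ p.2).map fun q => (p.1, q.1, q.2)

section Sweedler

variable {M V : Type} [AddCommMonoid M] [Module ℂ M] [AddCommMonoid V] [Module ℂ V]

theorem sum_map_apply_tmul (Φ : M ⊗[ℂ] M →ₗ[ℂ] V) (l : List (M × M)) :
    (l.map fun p => Φ (p.1 ⊗ₜ p.2)).sum = Φ (toT l) := by
  rw [toT, map_list_sum, List.map_map]
  rfl

theorem sum_map_tri_apply_tmul {ρ : M → List (M × M)} (Δ : M →ₗ[ℂ] M ⊗[ℂ] M)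
    (hρ : ∀ y, Δ y = toT (ρ y)) (Φ : M ⊗[ℂ] (M ⊗[ℂ] M) →ₗ[ℂ] V) (x : M) :
    ((tri ρ x).map fun s => Φ (s.1 ⊗ₜ (s.2.1 ⊗ₜ s.2.2))).sum = Φ (Δ.lTensor M (Δ x)) := by
  rw [tri, List.map_flatMap, List.flatMap_def, List.sum_flatten, List.map_map, hρ,
    ← LinearMap.comp_apply, ← sum_map_apply_tmul]
  congr 1
  refine List.map_congr_left fun p _ => ?_
  rw [Function.comp_apply, List.map_map, LinearMap.comp_apply, LinearMap.lTensor_tmul, hρ]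
  exact sum_map_apply_tmul (Φ ∘ₗ TensorProduct.mk ℂ M _ p.1) _

theorem sum_map_tri_smul_of_apply_eq_tmul {ρ : M → List (M × M)} (Δ : M →ₗ[ℂ] M ⊗[ℂ] M)
    (hρ : ∀ y, Δ y = toT (ρ y)) {x : M} (hx : Δ x = x ⊗ₜ x)
    (f g : M →ₗ[ℂ] ℂ) (m : M →ₗ[ℂ] V) :
    ((tri ρ x).map fun s => (f s.1 * g s.2.2) • m s.2.1).sum = (f x * g x) • m x := by
  have h := sum_map_tri_apply_tmul Δ hρ ((TensorProduct.lid ℂ V).toLinearMap ∘ₗ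
    TensorProduct.map f ((TensorProduct.rid ℂ V).toLinearMap ∘ₗ TensorProduct.map m g)) x
  simpa [hx, mul_smul, smul_comm (f _)] using h

end Sweedler

theorem Bialgebra.comul_one_eq_tmul {R B : Type} [CommSemiring R] [Semiring B] [Bialgebra R B] :
    Coalgebra.comul (R := R) (1 : B) = 1 ⊗ₜ 1 := by
  rw [Bialgebra.comul_one, Algebra.TensorProduct.one_def]

theorem quantumDouble_tmul_one_mul_one_tmul {H A : Type} [Ring H] [HopfAlgebra ℂ H]
    [Ring A] [Bialgebra ℂ A]
    {ρH : H → List (H × H)} {ρA : A → List (A × A)}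
    (hρH : ∀ x, Coalgebra.comul (R := ℂ) x = toT (ρH x))
    (hρA : ∀ x, Coalgebra.comul (R := ℂ) x = toT (ρA x))
    {pair : H →ₗ[ℂ] A →ₗ[ℂ] ℂ} (hpairOneH : ∀ a : A, pair 1 a = Coalgebra.counit (R := ℂ) a)
    {mulD : (A ⊗[ℂ] H) →ₗ[ℂ] (A ⊗[ℂ] H) →ₗ[ℂ] (A ⊗[ℂ] H)}
    (hmulD : ∀ (a : A) (h : H) (b : A) (g : H),
        mulD (a ⊗ₜ[ℂ] h) (b ⊗ₜ[ℂ] g)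
          = ((tri ρA b).map fun p => ((tri ρH h).map fun s =>
              (pair (HopfAlgebra.antipode (R := ℂ) s.1) p.1 * pair s.2.2 p.2.2)
                • ((p.2.1 * a) ⊗ₜ[ℂ] (s.2.1 * g))).sum).sum)
    (b : A) (g : H) :
    mulD (b ⊗ₜ 1) (1 ⊗ₜ g) = b ⊗ₜ g := by
  have inner (p : A × A × A) :
      ((tri ρH 1).map fun s => (pair (HopfAlgebra.antipode (R := ℂ) s.1) p.1 * pair s.2.2 p.2.2)
          • ((p.2.1 * b) ⊗ₜ[ℂ] (s.2.1 * g))).sum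
        = (Coalgebra.counit (R := ℂ) p.1 * Coalgebra.counit (R := ℂ) p.2.2)
          • ((p.2.1 * b) ⊗ₜ[ℂ] g) := by
    simpa [hpairOneH] using sum_map_tri_smul_of_apply_eq_tmul _ hρH
      Bialgebra.comul_one_eq_tmul (pair.flip p.1 ∘ₗ HopfAlgebra.antipode ℂ) (pair.flip p.2.2)
      (TensorProduct.mk ℂ A H (p.2.1 * b) ∘ₗ LinearMap.mulRight ℂ g)
  rw [hmulD, List.map_congr_left fun p _ => inner p]
  simpa using sum_map_tri_smul_of_apply_eq_tmul _ hρA Bialgebra.comul_one_eq_tmul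
    (Coalgebra.counit (R := ℂ)) (Coalgebra.counit (R := ℂ))
    ((TensorProduct.mk ℂ A H).flip g ∘ₗ LinearMap.mulRight ℂ b)

theorem HopfAlgebra.inv_antipode_star {R A : Type} [CommSemiring R] [Semiring A]
    [HopfAlgebra R A] [InvolutiveStar A]
    (hSstar : ∀ x : A, antipode R (star (antipode R (star x))) = x)
    {Sinv : A → A} (hSinv : Function.LeftInverse Sinv (antipode R)) (x : A) :
    Sinv (star x) = star (antipode R x) := by
  rw [← hSstar (star x), star_star, hSinv]

theorem quantum_double_antipode_star_general
    {H A : Type} [Ring H] [HopfAlgebra ℂ H] [StarRing H]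
    [Ring A] [HopfAlgebra ℂ A] [StarRing A]
    (ρH : H → List (H × H)) (ρA : A → List (A × A))
    (hρH : ∀ x, Coalgebra.comul (R := ℂ) x = toT (ρH x))
    (hρA : ∀ x, Coalgebra.comul (R := ℂ) x = toT (ρA x))
    -- Hopf *-algebra axioms for H
    (hSstarH : ∀ x : H, HopfAlgebra.antipode (R := ℂ)
        (star (HopfAlgebra.antipode (R := ℂ) (star x))) = x)
    -- Hopf *-algebra axioms for A
    (hSstarA : ∀ x : A, HopfAlgebra.antipode (R := ℂ)
        (star (HopfAlgebra.antipode (R := ℂ) (star x))) = x)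
    -- the Hopf algebra duality pairing ⟨·,·⟩ : H × A → ℂ, nondegenerate
    (pair : H →ₗ[ℂ] A →ₗ[ℂ] ℂ)
    (hpairOneH : ∀ a : A, pair 1 a = Coalgebra.counit (R := ℂ) a)
    -- the quantum double product on `D(H) = A ⊗ H`
    (mulD : (A ⊗[ℂ] H) →ₗ[ℂ] (A ⊗[ℂ] H) →ₗ[ℂ] (A ⊗[ℂ] H))
    (hmulD : ∀ (a : A) (h : H) (b : A) (g : H),
        mulD (a ⊗ₜ[ℂ] h) (b ⊗ₜ[ℂ] g)
          = ((tri ρA b).map fun p => ((tri ρH h).map fun s =>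
              (pair (HopfAlgebra.antipode (R := ℂ) s.1) p.1 * pair s.2.2 p.2.2)
                • ((p.2.1 * a) ⊗ₜ[ℂ] (s.2.1 * g))).sum).sum)
    -- the inverse of the antipode of `A`
    (SAinv : A → A)
    (hSAinv1 : ∀ a : A, SAinv (HopfAlgebra.antipode (R := ℂ) a) = a)
    -- the *-structure of `D(H)`: `(a⊗h)* = (1⊗h*)((S²a)*⊗1)`
    (st : A ⊗[ℂ] H → A ⊗[ℂ] H)
    (hstAdd : ∀ x y, st (x + y) = st x + st y)
    (hstGen : ∀ (a : A) (h : H),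
        st (a ⊗ₜ[ℂ] h)
          = mulD ((1 : A) ⊗ₜ[ℂ] star h)
              (star (HopfAlgebra.antipode (R := ℂ) (HopfAlgebra.antipode (R := ℂ) a))
                ⊗ₜ[ℂ] (1 : H)))
    -- the antipode of `D(H)`: an antialgebra map restricting to `S` on `H` and `S⁻¹` on `A`
    (SD : (A ⊗[ℂ] H) →ₗ[ℂ] (A ⊗[ℂ] H))
    (hSDmul : ∀ x y, SD (mulD x y) = mulD (SD y) (SD x))
    (hSDA : ∀ a : A, SD (a ⊗ₜ[ℂ] (1 : H)) = SAinv a ⊗ₜ[ℂ] (1 : H))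
    (hSDH : ∀ h : H, SD ((1 : A) ⊗ₜ[ℂ] h)
        = (1 : A) ⊗ₜ[ℂ] HopfAlgebra.antipode (R := ℂ) h) :
    -- `(S ∘ *)(a⊗h) = S⁻³(a*) ⊗ S(h*)`, and `(S ∘ *)² = id`
    (∀ (a : A) (h : H),
        SD (st (a ⊗ₜ[ℂ] h))
          = SAinv (SAinv (SAinv (star a)))
              ⊗ₜ[ℂ] HopfAlgebra.antipode (R := ℂ) (star h)) ∧
    (∀ x : A ⊗[ℂ] H, SD (st (SD (st x))) = x) := by
  have hSAinv_star := HopfAlgebra.inv_antipode_star hSstarA hSAinv1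
  have hSD_st (a : A) (h : H) : SD (st (a ⊗ₜ[ℂ] h))
      = SAinv (SAinv (SAinv (star a))) ⊗ₜ[ℂ] HopfAlgebra.antipode (R := ℂ) (star h) := by
    rw [hstGen, hSDmul, hSDA, hSDH,
      quantumDouble_tmul_one_mul_one_tmul hρH hρA hpairOneH hmulD]
    simp only [hSAinv_star]
  refine ⟨hSD_st, fun x => ?_⟩
  induction x using TensorProduct.induction_on with
  | zero =>
    have hst_zero : st 0 = 0 := by simpa using hstAdd 0 0
    rw [hst_zero, map_zero, hst_zero, map_zero]
  | tmul a h =>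
    rw [hSD_st, hSD_st, hSstarH]
    simp only [hSAinv_star, star_star, hSAinv1]
  | add x y hx hy => rw [hstAdd, map_add, hstAdd, map_add, hx, hy]

set_option maxHeartbeats 2000000 in
/-- For a finite-dimensional Hopf *-algebra `H`, the antipode-star map of the
quantum double `D(H)` (with *-structure `(a⊗h)* = (1⊗h*)((S²a)*⊗1)`, antipode restricting
to `S` on `H` and to `S⁻¹` on `H^{*op}`) satisfies
`(S ∘ *)(a ⊗ h) = S⁻³(a*) ⊗ S(h*)`, and consequently `(S ∘ *)² = id` on `D(H)`. -/
theorem quantum_double_antipode_star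
    {H A : Type} [Ring H] [HopfAlgebra ℂ H] [StarRing H] [StarModule ℂ H]
    [Ring A] [HopfAlgebra ℂ A] [StarRing A] [StarModule ℂ A]
    (ρH : H → List (H × H)) (ρA : A → List (A × A))
    (hρH : ∀ x, Coalgebra.comul (R := ℂ) x = toT (ρH x))
    (hρA : ∀ x, Coalgebra.comul (R := ℂ) x = toT (ρA x))
    -- Hopf *-algebra axioms for H
    (hcomulStarH : ∀ x : H, Coalgebra.comul (R := ℂ) (star x)
        = toT ((ρH x).map fun p => (star p.1, star p.2)))
    (hcounitStarH : ∀ x : H, Coalgebra.counit (R := ℂ) (star x)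
        = star (Coalgebra.counit (R := ℂ) (A := H) x))
    (hSstarH : ∀ x : H, HopfAlgebra.antipode (R := ℂ)
        (star (HopfAlgebra.antipode (R := ℂ) (star x))) = x)
    -- Hopf *-algebra axioms for A
    (hcomulStarA : ∀ x : A, Coalgebra.comul (R := ℂ) (star x)
        = toT ((ρA x).map fun p => (star p.1, star p.2)))
    (hcounitStarA : ∀ x : A, Coalgebra.counit (R := ℂ) (star x)
        = star (Coalgebra.counit (R := ℂ) (A := A) x))
    (hSstarA : ∀ x : A, HopfAlgebra.antipode (R := ℂ)
        (star (HopfAlgebra.antipode (R := ℂ) (star x))) = x)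
    -- the Hopf algebra duality pairing ⟨·,·⟩ : H × A → ℂ, nondegenerate
    (pair : H →ₗ[ℂ] A →ₗ[ℂ] ℂ)
    (hpairMulA : ∀ (h : H) (a b : A),
        pair h (a * b) = ((ρH h).map fun q => pair q.1 a * pair q.2 b).sum)
    (hpairMulH : ∀ (g h : H) (a : A),
        pair (g * h) a = ((ρA a).map fun p => pair g p.1 * pair h p.2).sum)
    (hpairOneA : ∀ h : H, pair h 1 = Coalgebra.counit (R := ℂ) h)
    (hpairOneH : ∀ a : A, pair 1 a = Coalgebra.counit (R := ℂ) a)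
    (hpairS : ∀ (h : H) (a : A),
        pair (HopfAlgebra.antipode (R := ℂ) h) a
          = pair h (HopfAlgebra.antipode (R := ℂ) a))
    (hpairStar : ∀ (h : H) (a : A), pair (star h) a
        = (starRingEnd ℂ) (pair h (star (HopfAlgebra.antipode (R := ℂ) a))))
    (hndH : ∀ h : H, (∀ a : A, pair h a = 0) → h = 0)
    (hndA : ∀ a : A, (∀ h : H, pair h a = 0) → a = 0)
    -- the quantum double product on `D(H) = A ⊗ H`
    (mulD : (A ⊗[ℂ] H) →ₗ[ℂ] (A ⊗[ℂ] H) →ₗ[ℂ] (A ⊗[ℂ] H))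
    (hmulD : ∀ (a : A) (h : H) (b : A) (g : H),
        mulD (a ⊗ₜ[ℂ] h) (b ⊗ₜ[ℂ] g)
          = ((tri ρA b).map fun p => ((tri ρH h).map fun s =>
              (pair (HopfAlgebra.antipode (R := ℂ) s.1) p.1 * pair s.2.2 p.2.2)
                • ((p.2.1 * a) ⊗ₜ[ℂ] (s.2.1 * g))).sum).sum)
    -- the inverse of the antipode of `A`
    (SAinv : A → A)
    (hSAinv1 : ∀ a : A, SAinv (HopfAlgebra.antipode (R := ℂ) a) = a)
    (hSAinv2 : ∀ a : A, HopfAlgebra.antipode (R := ℂ) (SAinv a) = a)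
    -- the *-structure of `D(H)`: `(a⊗h)* = (1⊗h*)((S²a)*⊗1)`
    (st : A ⊗[ℂ] H → A ⊗[ℂ] H)
    (hstAdd : ∀ x y, st (x + y) = st x + st y)
    (hstSmul : ∀ (c : ℂ) (x : A ⊗[ℂ] H), st (c • x) = (starRingEnd ℂ) c • st x)
    (hstMul : ∀ x y, st (mulD x y) = mulD (st y) (st x))
    (hstGen : ∀ (a : A) (h : H),
        st (a ⊗ₜ[ℂ] h)
          = mulD ((1 : A) ⊗ₜ[ℂ] star h)
              (star (HopfAlgebra.antipode (R := ℂ) (HopfAlgebra.antipode (R := ℂ) a))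
                ⊗ₜ[ℂ] (1 : H)))
    -- the antipode of `D(H)`: an antialgebra map restricting to `S` on `H` and `S⁻¹` on `A`
    (SD : (A ⊗[ℂ] H) →ₗ[ℂ] (A ⊗[ℂ] H))
    (hSDmul : ∀ x y, SD (mulD x y) = mulD (SD y) (SD x))
    (hSDA : ∀ a : A, SD (a ⊗ₜ[ℂ] (1 : H)) = SAinv a ⊗ₜ[ℂ] (1 : H))
    (hSDH : ∀ h : H, SD ((1 : A) ⊗ₜ[ℂ] h)
        = (1 : A) ⊗ₜ[ℂ] HopfAlgebra.antipode (R := ℂ) h) :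
    -- `(S ∘ *)(a⊗h) = S⁻³(a*) ⊗ S(h*)`, and `(S ∘ *)² = id`
    (∀ (a : A) (h : H),
        SD (st (a ⊗ₜ[ℂ] h))
          = SAinv (SAinv (SAinv (star a)))
              ⊗ₜ[ℂ] HopfAlgebra.antipode (R := ℂ) (star h)) ∧
    (∀ x : A ⊗[ℂ] H, SD (st (SD (st x))) = x) :=
  quantum_double_antipode_star_general ρH ρA hρH hρA hSstarH hSstarA pair hpairOneH mulD hmulD SAinv
    hSAinv1 st hstAdd hstGen SD hSDmul hSDA hSDH
end

section
/- For a finite-dimensional Hopf *-algebra H, the canonical quasitriangular structure R = Σ_a (f^a⊗1) ⊗ (1⊗e_a) of the quantum double D(H) (where {e_a} is a basis of H and {f^a} the dual basis) is antireal: R^{*⊗*} = R⁻¹. -/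
open scoped TensorProduct

/-!
Write `τ g = S (g*)`. The compatibilities of the pairing with `S` and `*` give
`⟨g, (S² fᵢ)*⟩ = conj ⟨τ g, fᵢ⟩` and, since `S (τ g)* = g`, also `⟨g, S⁻¹ fᵢ⟩ = ⟨(τ g)*, fᵢ⟩`.
Expanding `eᵢ*` in the basis `e`, the coefficient of `eⱼ` on the left pairs with `g` to
`Σᵢ conj (τ g)ᵢ (eᵢ*)ⱼ = ((τ g)*)ⱼ`, exactly as `S⁻¹ fⱼ` does. By nondegeneracy the two
elements of `A ⊗ H` agree, and the identity in `D(H) ⊗ D(H)` is their image under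
`a ⊗ h ↦ (a ⊗ 1) ⊗ (1 ⊗ h)`.
-/

namespace Module.Basis

variable {R M N ι : Type*} [CommSemiring R] [AddCommMonoid M] [Module R M]
  [AddCommMonoid N] [Module R N] [Fintype ι]

theorem sum_tmul_eq_sum_sum_repr_smul_tmul (e : Basis ι R M) (u : ι → N) (v : ι → M) :
    ∑ i, u i ⊗ₜ[R] v i = ∑ j, (∑ i, e.repr (v i) j • u i) ⊗ₜ[R] e j := by
  calc ∑ i, u i ⊗ₜ[R] v i = ∑ i, ∑ j, (e.repr (v i) j • u i) ⊗ₜ[R] e j := by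
        refine Finset.sum_congr rfl fun i _ => ?_
        conv_lhs => rw [← e.sum_repr (v i)]
        simp only [TensorProduct.tmul_sum, TensorProduct.tmul_smul, TensorProduct.smul_tmul']
    _ = ∑ j, (∑ i, e.repr (v i) j • u i) ⊗ₜ[R] e j := by
        rw [Finset.sum_comm]
        simp only [TensorProduct.sum_tmul]

theorem repr_star [StarRing R] [StarAddMonoid M] [StarModule R M] (e : Basis ι R M) (x : M)
    (j : ι) : e.repr (star x) j = ∑ i, star (e.repr x i) * e.repr (star (e i)) j := by
  conv_lhs => rw [← e.sum_repr x]
  simp only [star_sum, star_smul, map_sum, map_smul, Finsupp.coe_finsetSum,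
    Finsupp.coe_smul, Finset.sum_apply, Pi.smul_apply, smul_eq_mul]

theorem apply_dual_eq_repr [DecidableEq ι] (e : Basis ι R M) (pair : M →ₗ[R] N →ₗ[R] R)
    (f : ι → N) (hdual : ∀ i j, pair (e i) (f j) = if i = j then 1 else 0) (x : M) (i : ι) :
    pair x (f i) = e.repr x i := by
  conv_lhs => rw [← e.sum_repr x]
  simp only [map_sum, map_smul, LinearMap.sum_apply, LinearMap.smul_apply,
    hdual, smul_eq_mul, mul_ite, mul_one, mul_zero, Finset.sum_ite_eq', Finset.mem_univ,
    if_true]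

end Module.Basis

open Module

theorem sum_tmul_star_eq_sum_tmul_of_pair {R M N ι : Type*} [CommRing R] [StarRing R]
    [AddCommMonoid M] [Module R M] [StarAddMonoid M] [StarModule R M]
    [AddCommGroup N] [Module R N] [Fintype ι] [DecidableEq ι]
    (pair : M →ₗ[R] N →ₗ[R] R) (hnd : ∀ a, (∀ g, pair g a = 0) → a = 0)
    (e : Basis ι R M) (f : ι → N) (hdual : ∀ i j, pair (e i) (f j) = if i = j then 1 else 0)
    (τ : M → M) (u w : ι → N)
    (hu : ∀ g i, pair g (u i) = star (pair (τ g) (f i)))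
    (hw : ∀ g i, pair g (w i) = pair (star (τ g)) (f i)) :
    ∑ i, u i ⊗ₜ[R] star (e i) = ∑ i, w i ⊗ₜ[R] e i := by
  rw [e.sum_tmul_eq_sum_sum_repr_smul_tmul]
  refine Finset.sum_congr rfl fun j _ => congrArg (· ⊗ₜ[R] e j) ?_
  refine sub_eq_zero.mp (hnd _ fun g => ?_)
  rw [map_sub, sub_eq_zero, hw, e.apply_dual_eq_repr pair f hdual, e.repr_star, map_sum]
  refine Finset.sum_congr rfl fun i _ => ?_
  rw [map_smul, hu, e.apply_dual_eq_repr pair f hdual, smul_eq_mul, mul_comm]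

theorem quantum_double_R_antireal_general {ι : Type} [Fintype ι] [DecidableEq ι]
    {H A : Type} [Ring H] [HopfAlgebra ℂ H] [StarRing H] [StarModule ℂ H]
    [Ring A] [HopfAlgebra ℂ A] [StarRing A]
    -- Hopf *-algebra axioms for H
    (hSstarH : ∀ x : H, HopfAlgebra.antipode (R := ℂ)
        (star (HopfAlgebra.antipode (R := ℂ) (star x))) = x)
    -- the Hopf algebra duality pairing ⟨·,·⟩ : H × A → ℂ, nondegenerate
    (pair : H →ₗ[ℂ] A →ₗ[ℂ] ℂ)
    (hpairS : ∀ (h : H) (a : A),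
        pair (HopfAlgebra.antipode (R := ℂ) h) a
          = pair h (HopfAlgebra.antipode (R := ℂ) a))
    (hpairStar : ∀ (h : H) (a : A), pair (star h) a
        = (starRingEnd ℂ) (pair h (star (HopfAlgebra.antipode (R := ℂ) a))))
    (hndA : ∀ a : A, (∀ h : H, pair h a = 0) → a = 0)
    -- the inverse of the antipode of `A`
    (SAinv : A → A)
    (hSAinv2 : ∀ a : A, HopfAlgebra.antipode (R := ℂ) (SAinv a) = a)
    -- a basis `{e_a}` of `H` with dual basis `{fᵃ}` in `A`
    (e : Module.Basis ι ℂ H) (f : ι → A)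
    (hdual : ∀ i j : ι, pair (e i) (f j) = if i = j then (1 : ℂ) else 0) :
    -- `R^{*⊗*} = (S_D ⊗ id)(R) = R⁻¹` in `D(H) ⊗ D(H)`, with
    -- `(fᵢ ⊗ 1)* = (S² fᵢ)* ⊗ 1` and `(1 ⊗ eᵢ)* = 1 ⊗ eᵢ*`
    (∑ i : ι,
        (((star (HopfAlgebra.antipode (R := ℂ) (HopfAlgebra.antipode (R := ℂ) (f i)))
            ⊗ₜ[ℂ] (1 : H)) ⊗ₜ[ℂ] ((1 : A) ⊗ₜ[ℂ] star (e i)))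
          : (A ⊗[ℂ] H) ⊗[ℂ] (A ⊗[ℂ] H)))
      = ∑ i : ι,
        ((SAinv (f i) ⊗ₜ[ℂ] (1 : H)) ⊗ₜ[ℂ] ((1 : A) ⊗ₜ[ℂ] e i)) := by
  have canonical : ∑ i, star (HopfAlgebra.antipode ℂ (HopfAlgebra.antipode ℂ (f i)))
      ⊗ₜ[ℂ] star (e i) = ∑ i, SAinv (f i) ⊗ₜ[ℂ] e i := by
    refine sum_tmul_star_eq_sum_tmul_of_pair pair hndA e f hdual
      (fun g => HopfAlgebra.antipode ℂ (star g)) _ _ (fun g i => ?_) (fun g i => ?_)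
    · rw [hpairS, hpairStar, starRingEnd_apply, star_star]
    · conv_lhs => rw [← hSstarH g]
      rw [hpairS, hSAinv2]
  simpa only [map_sum, TensorProduct.map_tmul, TensorProduct.mk_apply, LinearMap.flip_apply]
    using congrArg (TensorProduct.map ((TensorProduct.mk ℂ A H).flip 1)
      (TensorProduct.mk ℂ A H 1)) canonical

set_option maxHeartbeats 2000000 in
/-- For a finite-dimensional Hopf *-algebra `H`, the canonical
quasitriangular structure `R = Σ_a (fᵃ ⊗ 1) ⊗ (1 ⊗ e_a)` of the quantum double `D(H)`
(where `{e_a}` is a basis of `H` and `{fᵃ}` the dual basis) is antireal: applying the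
*-structure of `D(H)` (namely `(a⊗1)* = (S²a)*⊗1`, `(1⊗h)* = 1⊗h*`) in both tensor
factors gives `R^{*⊗*} = R⁻¹`, where `R⁻¹ = (S_D ⊗ id)(R)` and the antipode of `D(H)`
restricts to `S⁻¹` on the factor `A = H^{*op}`. -/
theorem quantum_double_R_antireal {ι : Type} [Fintype ι] [DecidableEq ι]
    {H A : Type} [Ring H] [HopfAlgebra ℂ H] [StarRing H] [StarModule ℂ H]
    [Ring A] [HopfAlgebra ℂ A] [StarRing A] [StarModule ℂ A]
    (ρH : H → List (H × H)) (ρA : A → List (A × A))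
    (hρH : ∀ x, Coalgebra.comul (R := ℂ) x = toT (ρH x))
    (hρA : ∀ x, Coalgebra.comul (R := ℂ) x = toT (ρA x))
    -- Hopf *-algebra axioms for H
    (hcomulStarH : ∀ x : H, Coalgebra.comul (R := ℂ) (star x)
        = toT ((ρH x).map fun p => (star p.1, star p.2)))
    (hcounitStarH : ∀ x : H, Coalgebra.counit (R := ℂ) (star x)
        = star (Coalgebra.counit (R := ℂ) (A := H) x))
    (hSstarH : ∀ x : H, HopfAlgebra.antipode (R := ℂ)
        (star (HopfAlgebra.antipode (R := ℂ) (star x))) = x)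
    -- Hopf *-algebra axioms for A
    (hcomulStarA : ∀ x : A, Coalgebra.comul (R := ℂ) (star x)
        = toT ((ρA x).map fun p => (star p.1, star p.2)))
    (hcounitStarA : ∀ x : A, Coalgebra.counit (R := ℂ) (star x)
        = star (Coalgebra.counit (R := ℂ) (A := A) x))
    (hSstarA : ∀ x : A, HopfAlgebra.antipode (R := ℂ)
        (star (HopfAlgebra.antipode (R := ℂ) (star x))) = x)
    -- the Hopf algebra duality pairing ⟨·,·⟩ : H × A → ℂ, nondegenerate
    (pair : H →ₗ[ℂ] A →ₗ[ℂ] ℂ)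
    (hpairMulA : ∀ (h : H) (a b : A),
        pair h (a * b) = ((ρH h).map fun q => pair q.1 a * pair q.2 b).sum)
    (hpairMulH : ∀ (g h : H) (a : A),
        pair (g * h) a = ((ρA a).map fun p => pair g p.1 * pair h p.2).sum)
    (hpairOneA : ∀ h : H, pair h 1 = Coalgebra.counit (R := ℂ) h)
    (hpairOneH : ∀ a : A, pair 1 a = Coalgebra.counit (R := ℂ) a)
    (hpairS : ∀ (h : H) (a : A),
        pair (HopfAlgebra.antipode (R := ℂ) h) a
          = pair h (HopfAlgebra.antipode (R := ℂ) a))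
    (hpairStar : ∀ (h : H) (a : A), pair (star h) a
        = (starRingEnd ℂ) (pair h (star (HopfAlgebra.antipode (R := ℂ) a))))
    (hndH : ∀ h : H, (∀ a : A, pair h a = 0) → h = 0)
    (hndA : ∀ a : A, (∀ h : H, pair h a = 0) → a = 0)
    -- the inverse of the antipode of `A`
    (SAinv : A → A)
    (hSAinv1 : ∀ a : A, SAinv (HopfAlgebra.antipode (R := ℂ) a) = a)
    (hSAinv2 : ∀ a : A, HopfAlgebra.antipode (R := ℂ) (SAinv a) = a)
    -- a basis `{e_a}` of `H` with dual basis `{fᵃ}` in `A`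
    (e : Module.Basis ι ℂ H) (f : ι → A)
    (hdual : ∀ i j : ι, pair (e i) (f j) = if i = j then (1 : ℂ) else 0) :
    -- `R^{*⊗*} = (S_D ⊗ id)(R) = R⁻¹` in `D(H) ⊗ D(H)`, with
    -- `(fᵢ ⊗ 1)* = (S² fᵢ)* ⊗ 1` and `(1 ⊗ eᵢ)* = 1 ⊗ eᵢ*`
    (∑ i : ι,
        (((star (HopfAlgebra.antipode (R := ℂ) (HopfAlgebra.antipode (R := ℂ) (f i)))
            ⊗ₜ[ℂ] (1 : H)) ⊗ₜ[ℂ] ((1 : A) ⊗ₜ[ℂ] star (e i)))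
          : (A ⊗[ℂ] H) ⊗[ℂ] (A ⊗[ℂ] H)))
      = ∑ i : ι,
        ((SAinv (f i) ⊗ₜ[ℂ] (1 : H)) ⊗ₜ[ℂ] ((1 : A) ⊗ₜ[ℂ] e i)) :=
  quantum_double_R_antireal_general hSstarH pair hpairS hpairStar hndA SAinv hSAinv2 e f hdual
end

section
/- Let R ∈ Mₙ⊗Mₙ be a solution of the quantum Yang–Baxter equation of real type, i.e. conj(R^i_j{}^k_l) = R^l_k{}^j_i. Then the assignment (u^i_j)^{*̲} = u^j_i extends to an antilinear antimultiplicative involution on the braided matrix algebra B(R) with relations R₂₁ u₁ R₁₂ u₂ = u₂ R₂₁ u₁ R₁₂, and the braided coproduct Δ̲u^i_j = u^i_k ⊗ u^k_j satisfies Δ̲ ∘ *̲ = τ ∘ (*̲⊗*̲) ∘ Δ̲. -/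
open scoped TensorProduct

/-- The braided-matrix relations `R₂₁ u₁ R₁₂ u₂ = u₂ R₂₁ u₁ R₁₂` (entrywise, with
summation convention) as a relation on the free algebra on the `n²` generators
`u^i_j`. -/
def braidedMatrixRel {n : ℕ} (R : Fin n → Fin n → Fin n → Fin n → ℂ) :
    FreeAlgebra ℂ (Fin n × Fin n) → FreeAlgebra ℂ (Fin n × Fin n) → Prop :=
  fun x y => ∃ i j k l : Fin n,
    (x = ∑ a : Fin n, ∑ b : Fin n, ∑ c : Fin n, ∑ d : Fin n,
        (R k a i b * R c j a d) • (FreeAlgebra.ι ℂ (b, c) * FreeAlgebra.ι ℂ (d, l))) ∧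
    (y = ∑ a : Fin n, ∑ b : Fin n, ∑ c : Fin n, ∑ d : Fin n,
        (R a b i c * R d j b l) • (FreeAlgebra.ι ℂ (k, a) * FreeAlgebra.ι ℂ (c, d)))

/-- The braided matrix algebra `B(R)`. -/
def BraidedMatrices {n : ℕ} (R : Fin n → Fin n → Fin n → Fin n → ℂ) : Type :=
  RingQuot (braidedMatrixRel R)

noncomputable instance {n : ℕ} (R : Fin n → Fin n → Fin n → Fin n → ℂ) :
    Ring (BraidedMatrices R) := by unfold BraidedMatrices; infer_instance

noncomputable instance {n : ℕ} (R : Fin n → Fin n → Fin n → Fin n → ℂ) :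
    Algebra ℂ (BraidedMatrices R) := by unfold BraidedMatrices; infer_instance

/-- The matrix generators `u^i_j` of `B(R)`. -/
noncomputable def ugen {n : ℕ} (R : Fin n → Fin n → Fin n → Fin n → ℂ)
    (i j : Fin n) : BraidedMatrices R :=
  RingQuot.mkAlgHom ℂ (braidedMatrixRel R) (FreeAlgebra.ι ℂ (i, j))

/-!
The assignment `u^i_j ↦ u^j_i` extends from the generators to a conjugate-linear
antihomomorphism of the free algebra, i.e. to an algebra map into the opposite algebra with
scalars acting through complex conjugation. Real type of `R` makes this map respect the
relations: it sends the two sides of the relation with indices `(i, j, k, l)` to the two sides,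
exchanged, of the relation with indices `(j, i, l, k)`, up to renaming the summation variables.
The square of the induced map on `B(R)` is a `ℂ`-algebra endomorphism fixing the generators,
hence the identity, and the coproduct identity only involves the generators.
-/

lemma Fintype.sum_sum_sum_sum_comm {α M : Type*} [Fintype α] [AddCommMonoid M]
    (f : α → α → α → α → M) :
    ∑ a, ∑ b, ∑ c, ∑ d, f d a c b = ∑ a, ∑ b, ∑ c, ∑ d, f a b c d := by
  simp only [← Fintype.sum_prod_type']
  exact Fintype.sum_equiv ⟨fun p => (p.2.2.2, p.1, p.2.2.1, p.2.1),
    fun p => (p.2.1, p.2.2.2, p.2.2.1, p.1), fun _ => rfl, fun _ => rfl⟩ _ _ fun _ => rfl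

/-- `Aᵐᵒᵖ` with `k` acting through `star`, so that `k`-algebra maps into it are the
`star`-semilinear antimultiplicative maps. -/
def StarOpposite (_k A : Type*) : Type _ := Aᵐᵒᵖ

namespace StarOpposite

variable {k A : Type*} [Semiring A]

instance : Semiring (StarOpposite k A) := inferInstanceAs (Semiring Aᵐᵒᵖ)

def op (x : A) : StarOpposite k A := MulOpposite.op x

def unop : StarOpposite k A ≃+ A := MulOpposite.opAddEquiv.symm

@[simp] lemma unop_op (x : A) : unop (op x : StarOpposite k A) = x := rfl

@[simp] lemma unop_one : unop (1 : StarOpposite k A) = 1 := rfl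

@[simp] lemma unop_mul (x y : StarOpposite k A) : unop (x * y) = unop y * unop x := rfl

variable [CommSemiring k] [StarRing k] [Algebra k A]

instance : Algebra k (StarOpposite k A) := Algebra.compHom Aᵐᵒᵖ (starRingEnd k)

@[simp] lemma unop_smul (c : k) (x : StarOpposite k A) : unop (c • x) = star c • unop x := rfl

lemma unop_algebraMap (c : k) :
    unop (algebraMap k (StarOpposite k A) c) = algebraMap k A (star c) := rfl

variable {B C : Type*} [Semiring B] [Algebra k B] [Semiring C] [Algebra k C]

def comp (g : B →ₐ[k] StarOpposite k C) (f : A →ₐ[k] StarOpposite k B) : A →ₐ[k] C where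
  toFun x := unop (g (unop (f x)))
  map_one' := by simp only [map_one, unop_one]
  map_mul' x y := by simp only [map_mul, unop_mul]
  map_zero' := by simp only [map_zero]
  map_add' x y := by simp only [map_add]
  commutes' c := by simp only [AlgHom.commutes, unop_algebraMap, star_star]

@[simp] lemma comp_apply (g : B →ₐ[k] StarOpposite k C) (f : A →ₐ[k] StarOpposite k B)
    (x : A) :
    comp g f x = unop (g (unop (f x))) := rfl

end StarOpposite

namespace BraidedMatrices

open StarOpposite

variable {n : ℕ} (R : Fin n → Fin n → Fin n → Fin n → ℂ)

@[simp] lemma mkAlgHom_ι (i j : Fin n) :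
    RingQuot.mkAlgHom ℂ (braidedMatrixRel R) (FreeAlgebra.ι ℂ (i, j)) = ugen R i j := rfl

noncomputable def freeStar :
    FreeAlgebra ℂ (Fin n × Fin n) →ₐ[ℂ] StarOpposite ℂ (BraidedMatrices R) :=
  FreeAlgebra.lift ℂ fun p => op (ugen R p.2 p.1)

@[simp] lemma freeStar_ι (p : Fin n × Fin n) :
    freeStar R (FreeAlgebra.ι ℂ p) = op (ugen R p.2 p.1) :=
  FreeAlgebra.lift_ι_apply _ _

lemma freeStar_eq_of_rel (hreal : ∀ i j k l, (starRingEnd ℂ) (R i j k l) = R l k j i)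
    {x y : FreeAlgebra ℂ (Fin n × Fin n)} (h : braidedMatrixRel R x y) :
    freeStar R x = freeStar R y := by
  obtain ⟨i, j, k, l, rfl, rfl⟩ := h
  have key := RingQuot.mkAlgHom_rel ℂ (s := braidedMatrixRel R) ⟨j, i, l, k, rfl, rfl⟩
  simp only [map_sum, map_smul, map_mul, mkAlgHom_ι] at key
  have hstar : ∀ i j k l, star (R i j k l) = R l k j i := hreal
  apply unop.injective
  simp only [map_sum, map_smul, map_mul, freeStar_ι, unop_smul, unop_mul, unop_op, star_mul',
    hstar]
  calc _ = ∑ a, ∑ b, ∑ c, ∑ d, (R d a j c * R b i a k) • (ugen R l d * ugen R c b) := by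
        simp only [mul_comm (R _ i _ k)]
    _ = ∑ a, ∑ b, ∑ c, ∑ d, (R a b j c * R d i b k) • (ugen R l a * ugen R c d) :=
        Fintype.sum_sum_sum_sum_comm fun a b c d =>
          (R a b j c * R d i b k) • (ugen R l a * ugen R c d)
    _ = ∑ a, ∑ b, ∑ c, ∑ d, (R l a j b * R c i a d) • (ugen R b c * ugen R d k) :=
        key.symm
    _ = ∑ a, ∑ b, ∑ c, ∑ d, (R l b j d * R c i b a) • (ugen R d c * ugen R a k) :=
        Fintype.sum_sum_sum_sum_comm fun a b c d =>
          (R l b j d * R c i b a) • (ugen R d c * ugen R a k)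
    _ = _ := by simp only [mul_comm (R l _ j _)]

variable {R} (hreal : ∀ i j k l, (starRingEnd ℂ) (R i j k l) = R l k j i)

noncomputable def starAlgHom : BraidedMatrices R →ₐ[ℂ] StarOpposite ℂ (BraidedMatrices R) :=
  RingQuot.liftAlgHom ℂ ⟨freeStar R, fun _ _ => freeStar_eq_of_rel R hreal⟩

@[simp] lemma starAlgHom_ugen (i j : Fin n) : starAlgHom hreal (ugen R i j) = op (ugen R j i) :=
  (RingQuot.liftAlgHom_mkAlgHom_apply ℂ _ _ _).trans (freeStar_ι R (i, j))

lemma comp_starAlgHom_starAlgHom :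
    comp (starAlgHom hreal) (starAlgHom hreal) = AlgHom.id ℂ (BraidedMatrices R) :=
  RingQuot.ringQuot_ext' _ _ _ <| FreeAlgebra.hom_ext <| funext fun ⟨i, j⟩ => by
    change comp (starAlgHom hreal) (starAlgHom hreal) (ugen R i j) = ugen R i j
    simp only [comp_apply, starAlgHom_ugen, unop_op]

noncomputable def braidedStar : BraidedMatrices R →+ BraidedMatrices R :=
  unop.toAddMonoidHom.comp (starAlgHom hreal).toRingHom.toAddMonoidHom

lemma braidedStar_apply (x : BraidedMatrices R) :
    braidedStar hreal x = unop (starAlgHom hreal x) := rfl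

lemma braidedStar_smul (c : ℂ) (x : BraidedMatrices R) :
    braidedStar hreal (c • x) = star c • braidedStar hreal x := by
  simp only [braidedStar_apply, map_smul, unop_smul]

lemma braidedStar_mul (x y : BraidedMatrices R) :
    braidedStar hreal (x * y) = braidedStar hreal y * braidedStar hreal x := by
  simp only [braidedStar_apply, map_mul, unop_mul]

lemma braidedStar_braidedStar (x : BraidedMatrices R) :
    braidedStar hreal (braidedStar hreal x) = x :=
  DFunLike.congr_fun (comp_starAlgHom_starAlgHom hreal) x

lemma braidedStar_ugen (i j : Fin n) : braidedStar hreal (ugen R i j) = ugen R j i := by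
  simp only [braidedStar_apply, starAlgHom_ugen, unop_op]

end BraidedMatrices

/-- If `R` is a solution of the QYBE of real type
(`conj R^i_j{}^k_l = R^l_k{}^j_i`), then `(u^i_j)^{*̲} = u^j_i` extends to an antilinear
antimultiplicative involution `*̲` on the braided matrix algebra `B(R)`, and the braided
coproduct `Δ̲ u^i_j = Σ_k u^i_k ⊗ u^k_j` satisfies `Δ̲ ∘ *̲ = τ ∘ (*̲ ⊗ *̲) ∘ Δ̲` (on the
matrix generators). -/
theorem braided_matrix_star_structure
    {n : ℕ} (R : Fin n → Fin n → Fin n → Fin n → ℂ)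
    (hreal : ∀ i j k l, (starRingEnd ℂ) (R i j k l) = R l k j i) :
    ∃ st : BraidedMatrices R →+ BraidedMatrices R,
      -- antilinear
      (∀ (c : ℂ) (x : BraidedMatrices R), st (c • x) = (starRingEnd ℂ) c • st x) ∧
      -- antimultiplicative
      (∀ x y : BraidedMatrices R, st (x * y) = st y * st x) ∧
      -- involution
      (∀ x : BraidedMatrices R, st (st x) = x) ∧
      -- extending the hermitian involution on the generators
      (∀ i j : Fin n, st (ugen R i j) = ugen R j i) ∧
      -- `Δ̲((u^i_j)^{*̲}) = τ((*̲ ⊗ *̲)(Δ̲ u^i_j))` on the generators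
      (∀ i j : Fin n,
          (∑ k : Fin n, ugen R j k ⊗ₜ[ℂ] ugen R k i)
            = ∑ k : Fin n, st (ugen R k j) ⊗ₜ[ℂ] st (ugen R i k)) := by
  open BraidedMatrices in
  exact ⟨braidedStar hreal, braidedStar_smul hreal, braidedStar_mul hreal,
    braidedStar_braidedStar hreal, braidedStar_ugen hreal,
    fun i j => by simp only [braidedStar_ugen]⟩
end

section
/- In the braided matrix algebra BM_q(2) with generators a, b, c, d and relations ba = q²ab, ca = q⁻²ac, da = ad, bc = cb + (1−q⁻²)a(d−a), db = bd + (1−q⁻²)ab, cd = dc + (1−q⁻²)ca, the element x₀ = qd + q⁻¹a is central. -/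
/-- In the braided matrix algebra `BM_q(2)` with generators `a, b, c, d` and
relations `ba = q²ab`, `ca = q⁻²ac`, `da = ad`, `bc = cb + (1−q⁻²)a(d−a)`,
`db = bd + (1−q⁻²)ab`, `cd = dc + (1−q⁻²)ca`, the element `x₀ = qd + q⁻¹a` is central. -/
theorem bmq2_x0_central
    {A : Type} [Ring A] [Algebra ℂ A]
    (q : ℂ) (hq : q ≠ 0)
    (a b c d : A)
    -- the six defining relations of BM_q(2)
    (hba : b * a = q ^ 2 • (a * b))
    (hca : c * a = (q ^ 2)⁻¹ • (a * c))
    (hda : d * a = a * d)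
    (hbc : b * c = c * b + (1 - (q ^ 2)⁻¹) • (a * (d - a)))
    (hdb : d * b = b * d + (1 - (q ^ 2)⁻¹) • (a * b))
    (hcd : c * d = d * c + (1 - (q ^ 2)⁻¹) • (c * a))
    -- `A` is generated by `a, b, c, d`
    (hgen : Algebra.adjoin ℂ {a, b, c, d} = (⊤ : Subalgebra ℂ A)) :
    (q • d + q⁻¹ • a) ∈ Subalgebra.center ℂ A := by
  set x : A := q • d + q⁻¹ • a with hx
  have hxa : x * a = a * x := by
    simp only [hx, add_mul, mul_add, smul_mul_assoc, mul_smul_comm, hda]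
  have hxb : x * b = b * x := by
    simp only [hx, add_mul, mul_add, smul_mul_assoc, mul_smul_comm, hdb, hba]
    match_scalars <;> field_simp <;> ring
  have hxc : x * c = c * x := by
    simp only [hx, add_mul, mul_add, smul_mul_assoc, mul_smul_comm, hcd, hca]
    match_scalars <;> field_simp <;> ring
  have hxd : x * d = d * x := by
    simp only [hx, add_mul, mul_add, smul_mul_assoc, mul_smul_comm, hda]
  have hsub : Algebra.adjoin ℂ {a, b, c, d} ≤ Subalgebra.centralizer ℂ {x} := by
    rw [Algebra.adjoin_le_iff]
    intro y hy
    simp only [Set.mem_insert_iff, Set.mem_singleton_iff] at hy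
    rw [SetLike.mem_coe, Subalgebra.mem_centralizer_iff]
    rintro z rfl
    rcases hy with rfl | rfl | rfl | rfl
    · exact hxa
    · exact hxb
    · exact hxc
    · exact hxd
  rw [hgen, top_le_iff] at hsub
  rw [Subalgebra.mem_center_iff]
  intro y
  have : y ∈ Subalgebra.centralizer ℂ {x} := hsub ▸ Algebra.mem_top
  exact (Subalgebra.mem_centralizer_iff ℂ |>.mp this x rfl).symm
end

section
/- In BM_q(2), the braided determinant ad − q²cb is central. -/
/-- In the braided matrix algebra `BM_q(2)` with generators `a, b, c, d` and
relations `ba = q²ab`, `ca = q⁻²ac`, `da = ad`, `bc = cb + (1−q⁻²)a(d−a)`,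
`db = bd + (1−q⁻²)ab`, `cd = dc + (1−q⁻²)ca`, the braided determinant `ad − q²cb` is
central. -/
theorem bmq2_braided_determinant_central
    {A : Type} [Ring A] [Algebra ℂ A]
    (q : ℂ) (hq : q ≠ 0)
    (a b c d : A)
    -- the six defining relations of BM_q(2)
    (hba : b * a = q ^ 2 • (a * b))
    (hca : c * a = (q ^ 2)⁻¹ • (a * c))
    (hda : d * a = a * d)
    (hbc : b * c = c * b + (1 - (q ^ 2)⁻¹) • (a * (d - a)))
    (hdb : d * b = b * d + (1 - (q ^ 2)⁻¹) • (a * b))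
    (hcd : c * d = d * c + (1 - (q ^ 2)⁻¹) • (c * a))
    -- `A` is generated by `a, b, c, d`
    (hgen : Algebra.adjoin ℂ {a, b, c, d} = (⊤ : Subalgebra ℂ A)) :
    (a * d - q ^ 2 • (c * b)) ∈ Subalgebra.center ℂ A := by
  have hq2 : q ^ 2 ≠ 0 := pow_ne_zero _ hq
  set D : A := a * d - q ^ 2 • (c * b) with hD
  have hba' : ∀ x : A, b * (a * x) = q ^ 2 • (a * (b * x)) := fun x => by
    rw [← mul_assoc, hba, smul_mul_assoc, mul_assoc]
  have hca' : ∀ x : A, c * (a * x) = (q ^ 2)⁻¹ • (a * (c * x)) := fun x => by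
    rw [← mul_assoc, hca, smul_mul_assoc, mul_assoc]
  have hda' : ∀ x : A, d * (a * x) = a * (d * x) := fun x => by
    rw [← mul_assoc, hda, mul_assoc]
  have hbc' : ∀ x : A, b * (c * x) =
      c * (b * x) + (1 - (q ^ 2)⁻¹) • (a * (d * x)) - (1 - (q ^ 2)⁻¹) • (a * (a * x)) :=
    fun x => by
      rw [← mul_assoc, hbc, add_mul, smul_mul_assoc, mul_sub, sub_mul, mul_assoc, mul_assoc,
        mul_assoc, smul_sub, add_sub_assoc]
  have hdb' : ∀ x : A, d * (b * x) = b * (d * x) + (1 - (q ^ 2)⁻¹) • (a * (b * x)) :=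
    fun x => by
      rw [← mul_assoc, hdb, add_mul, smul_mul_assoc, mul_assoc, mul_assoc]
  have hdc : d * c = c * d - (1 - (q ^ 2)⁻¹) • (c * a) := by
    rw [hcd]; abel
  have hdc' : ∀ x : A, d * (c * x) = c * (d * x) - (1 - (q ^ 2)⁻¹) • (c * (a * x)) :=
    fun x => by
      rw [← mul_assoc, hdc, sub_mul, smul_mul_assoc, mul_assoc, mul_assoc]
  have hcomm : ∀ x ∈ ({a, b, c, d} : Set A), x * D = D * x := by
    intro x hx
    rcases hx with rfl | rfl | rfl | rfl <;>
    · rw [hD]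
      simp only [mul_sub, sub_mul, mul_add, add_mul, mul_smul_comm, smul_mul_assoc, smul_sub,
        smul_add, smul_smul, mul_assoc, hba', hca', hda', hbc', hdb', hdc', hba, hca, hda,
        hbc, hdb, hdc]
      match_scalars <;> field_simp <;> ring
  have hcent : ∀ x : A, x * D = D * x := by
    intro x
    have hx : x ∈ Algebra.adjoin ℂ ({a, b, c, d} : Set A) := by rw [hgen]; trivial
    induction hx using Algebra.adjoin_induction with
    | mem y hy => exact hcomm y hy
    | algebraMap r =>
        rw [Algebra.commutes]
    | add y z _ _ hy hz => rw [add_mul, mul_add, hy, hz]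
    | mul y z _ _ hy hz => rw [mul_assoc, hz, ← mul_assoc, hy, mul_assoc]
  rw [Subalgebra.mem_center_iff]
  exact hcent
end
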